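/- Let n ≥ 0 be an integer, T a finite abelian group, A = ℤⁿ × T, and let T' = {0} × T be the torsion subgroup of A. For a fixed subgroup I' ⊆ T (identified with {0} × I' ⊆ T'), the set 𝒥 of subgroups J ⊆ A satisfying J ∩ T' = {0} × I' and J + T' = A is finite of cardinality |T/I'|ⁿ. -/
import Mathlib

/-- let `A = ℤⁿ × T` with `T` a finite abelian group and `T' = {0} × T` its
torsion subgroup.  For a fixed subgroup `I' ⊆ T`, the collection of subgroups `J ⊆ A` with
`J ∩ T' = {0} × I'` and `J + T' = A` is finite of cardinality `|T/I'|ⁿ`. -/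
theorem count_complementary_subgroups (n : ℕ) (T : Type*) [AddCommGroup T] [Finite T]
    (I' : AddSubgroup T) :
    Set.Finite {J : AddSubgroup ((Fin n → ℤ) × T) |
        J ⊓ (⊥ : AddSubgroup (Fin n → ℤ)).prod (⊤ : AddSubgroup T)
            = (⊥ : AddSubgroup (Fin n → ℤ)).prod I' ∧
          J ⊔ (⊥ : AddSubgroup (Fin n → ℤ)).prod (⊤ : AddSubgroup T) = ⊤} ∧
      Nat.card {J : AddSubgroup ((Fin n → ℤ) × T) |
        J ⊓ (⊥ : AddSubgroup (Fin n → ℤ)).prod (⊤ : AddSubgroup T)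
            = (⊥ : AddSubgroup (Fin n → ℤ)).prod I' ∧
          J ⊔ (⊥ : AddSubgroup (Fin n → ℤ)).prod (⊤ : AddSubgroup T) = ⊤}
        = (Nat.card (T ⧸ I')) ^ n := by
  classical
  set Z : Type _ := Fin n → ℤ with hZ
  set Q : Type _ := T ⧸ I' with hQ
  let π : T →+ Q := QuotientAddGroup.mk' I'
  set S : Set (AddSubgroup (Z × T)) :=
    {J : AddSubgroup (Z × T) |
        J ⊓ (⊥ : AddSubgroup Z).prod (⊤ : AddSubgroup T)
            = (⊥ : AddSubgroup Z).prod I' ∧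
          J ⊔ (⊥ : AddSubgroup Z).prod (⊤ : AddSubgroup T) = ⊤} with hS
  -- graph construction
  let Φ : (Z →+ Q) → AddSubgroup (Z × T) := fun f =>
    AddMonoidHom.ker (f.comp (AddMonoidHom.fst Z T) - π.comp (AddMonoidHom.snd Z T))
  have hmem : ∀ (f : Z →+ Q) (p : Z × T), p ∈ Φ f ↔ f p.1 = π p.2 := by
    intro f p
    simp [Φ, AddMonoidHom.mem_ker, sub_eq_zero]
  have hΦ : ∀ f, Φ f ∈ S := by
    intro f
    constructor
    · ext p
      simp only [AddSubgroup.mem_inf, AddSubgroup.mem_prod, AddSubgroup.mem_bot,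
        AddSubgroup.mem_top, and_true, hmem]
      constructor
      · rintro ⟨h1, h2⟩
        refine ⟨h2, ?_⟩
        rw [h2] at h1
        simp only [map_zero] at h1
        exact (QuotientAddGroup.eq_zero_iff p.2).mp h1.symm
      · rintro ⟨h1, h2⟩
        refine ⟨?_, h1⟩
        rw [h1]
        simp only [map_zero]
        exact ((QuotientAddGroup.eq_zero_iff p.2).mpr h2).symm
    · rw [eq_top_iff]
      rintro p -
      obtain ⟨t₀, ht₀⟩ := QuotientAddGroup.mk'_surjective I' (f p.1)
      rw [AddSubgroup.mem_sup]
      refine ⟨(p.1, t₀), ?_, (0, p.2 - t₀), ?_, ?_⟩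
      · rw [hmem]; exact ht₀.symm
      · simp [AddSubgroup.mem_prod]
      · ext <;> simp
  have hinj : Function.Injective Φ := by
    intro f g hfg
    refine AddMonoidHom.ext fun x => ?_
    obtain ⟨t₀, ht₀⟩ := QuotientAddGroup.mk'_surjective I' (f x)
    have h1 : (x, t₀) ∈ Φ f := (hmem f _).mpr ht₀.symm
    rw [hfg] at h1
    have h2 := (hmem g _).mp h1
    rw [h2, ht₀]
  have hsurj : ∀ J ∈ S, ∃ f, Φ f = J := by
    rintro J ⟨hJ1, hJ2⟩
    have hbI : (⊥ : AddSubgroup Z).prod I' ≤ J := hJ1 ▸ inf_le_left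
    have ht : ∀ x : Z, ∃ t : T, (x, t) ∈ J := by
      intro x
      have : ((x, (0 : T)) : Z × T) ∈ J ⊔ (⊥ : AddSubgroup Z).prod (⊤ : AddSubgroup T) := by
        rw [hJ2]; trivial
      rw [AddSubgroup.mem_sup] at this
      obtain ⟨y, hy, z, hz, hyz⟩ := this
      rw [AddSubgroup.mem_prod, AddSubgroup.mem_bot] at hz
      refine ⟨y.2, ?_⟩
      have hx : y.1 = x := by
        have := congrArg Prod.fst hyz
        simpa [hz.1] using this
      rw [← hx]
      exact hy
    choose t htJ using ht
    have hwd : ∀ (x : Z) (t' : T), (x, t') ∈ J → π t' = π (t x) := by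
      intro x t' h
      have hd : ((0 : Z), t' - t x) ∈ J ⊓ (⊥ : AddSubgroup Z).prod (⊤ : AddSubgroup T) := by
        constructor
        · have := AddSubgroup.sub_mem J h (htJ x)
          simpa using this
        · simp [AddSubgroup.mem_prod]
      rw [hJ1, AddSubgroup.mem_prod] at hd
      exact QuotientAddGroup.eq_iff_sub_mem.mpr hd.2
    let f : Z →+ Q := AddMonoidHom.mk' (fun x => π (t x)) (by
      intro x y
      have hmemJ : (x + y, t x + t y) ∈ J := by
        have := AddSubgroup.add_mem J (htJ x) (htJ y)
        simpa using this
      show π (t (x + y)) = π (t x) + π (t y)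
      rw [← map_add]
      exact (hwd (x + y) (t x + t y) hmemJ).symm)
    refine ⟨f, ?_⟩
    ext p
    rw [hmem]
    show π (t p.1) = π p.2 ↔ p ∈ J
    constructor
    · intro h
      have hsub : p.2 - t p.1 ∈ I' := QuotientAddGroup.eq_iff_sub_mem.mp h.symm
      have h0 : ((0 : Z), p.2 - t p.1) ∈ J := hbI (by simp [AddSubgroup.mem_prod, hsub])
      have := AddSubgroup.add_mem J (htJ p.1) h0
      simpa using this
    · intro h
      have : (p.1, p.2) ∈ J := by simpa using h
      exact (hwd p.1 p.2 this).symm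
  -- the bijection
  let e : (Z →+ Q) ≃ S :=
    Equiv.ofBijective (fun f => ⟨Φ f, hΦ f⟩)
      ⟨fun f g h => hinj (congrArg Subtype.val h),
       fun ⟨J, hJ⟩ => by
        obtain ⟨f, hf⟩ := hsurj J hJ
        exact ⟨f, Subtype.ext hf⟩⟩
  have hfin : Finite (Z →+ Q) := by
    have e2 : (Z →+ Q) ≃ (Fin n → Q) :=
      ((addMonoidHomLequivInt (B := Q) ℤ).toEquiv.trans
        (((Pi.basisFun ℤ (Fin n)).constr ℤ).toEquiv.symm))
    exact Finite.of_equiv _ e2.symm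
  have hcard : Nat.card (Z →+ Q) = (Nat.card Q) ^ n := by
    have e2 : (Z →+ Q) ≃ (Fin n → Q) :=
      ((addMonoidHomLequivInt (B := Q) ℤ).toEquiv.trans
        (((Pi.basisFun ℤ (Fin n)).constr ℤ).toEquiv.symm))
    rw [Nat.card_congr e2, Nat.card_fun, Nat.card_eq_fintype_card (α := Fin n), Fintype.card_fin]
  constructor
  · have : Finite S := Finite.of_equiv _ e
    exact Set.toFinite S
  · rw [← Nat.card_congr e, hcard]
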